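/- arXiv:2207.07438 — 3 statements merged into one kernel-verified Lean document; each statement's English description precedes it below -/
import Mathlib

section
/- Let M be a maximal b-matching in a bipartite graph G = (L ∪ R, E) where every vertex of L has capacity ℓ and every vertex of R has capacity r (ℓ, r positive integers). Then |M| ≥ μ(G) · (ℓ·r)/(ℓ+r), where μ(G) is the maximum matching size of G. -/
/-
Fix a maximum matching `N` and call a vertex saturated when `M` uses all of its capacity.
Maximality of `M` says exactly that the saturated vertices form a vertex cover, so
`|N| ≤ a + b` where `a` (resp. `b`) counts the saturated vertices of `L` (resp. `R`).
Since `L` is independent, every edge of `M` meets `L` at most once, so summing degrees over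
the saturated vertices of `L` gives `ℓ a ≤ |M|`; likewise `r b ≤ |M|`. Hence
`μ(G) ℓ r ≤ (a + b) ℓ r ≤ (ℓ + r) |M|`.
-/

variable {V : Type*}

/-- A matching of `G`: a finset of edges of `G` that are pairwise vertex-disjoint. -/
def IsMatching (G : SimpleGraph V) (M : Finset (Sym2 V)) : Prop :=
  (∀ e ∈ M, e ∈ G.edgeSet) ∧
    ∀ e ∈ M, ∀ f ∈ M, e ≠ f → ∀ v : V, v ∈ e → v ∉ f

/-- A vertex is matched by `M` if it belongs to some edge of `M`. -/
def Matched (M : Finset (Sym2 V)) (v : V) : Prop := ∃ e ∈ M, v ∈ e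

/-- A maximal matching: every edge of `G` has a matched endpoint. -/
def IsMaximalMatching (G : SimpleGraph V) (M : Finset (Sym2 V)) : Prop :=
  IsMatching G M ∧ ∀ e ∈ G.edgeSet, ∃ v, v ∈ e ∧ Matched M v

/-- μ(G): the maximum matching size of `G`. -/
noncomputable def matchNum (G : SimpleGraph V) : ℕ :=
  sSup {n | ∃ M : Finset (Sym2 V), IsMatching G M ∧ M.card = n}

/-- The subgraph of `G` induced by the vertex set `S` (on the same vertex type). -/
def restrictVerts (G : SimpleGraph V) (S : Set V) : SimpleGraph V where
  Adj u v := G.Adj u v ∧ u ∈ S ∧ v ∈ S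
  symm := ⟨fun u v h => ⟨h.1.symm, h.2.2, h.2.1⟩⟩
  loopless := ⟨fun u h => G.irrefl h.1⟩

/-- `M` is an ε-approximately maximal matching of `G`: it is maximal in a subgraph of `G`
obtained by deleting at most `ε * μ(G)` vertices. -/
def IsAMM (G : SimpleGraph V) (ε : ℝ) (M : Finset (Sym2 V)) : Prop :=
  IsMatching G M ∧ ∃ D : Finset V, (D.card : ℝ) ≤ ε * matchNum G ∧
    IsMaximalMatching (restrictVerts G ((↑D : Set V)ᶜ)) M

/-- A b-matching of `G` with capacities `cap`: a multiset of edges of `G` with each vertex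
incident to at most `cap v` multi-edges. -/
def IsBMatching [DecidableEq V] (G : SimpleGraph V) (cap : V → ℕ)
    (M : Multiset (Sym2 V)) : Prop :=
  (∀ e ∈ M, e ∈ G.edgeSet) ∧ ∀ v : V, M.countP (fun e => v ∈ e) ≤ cap v

/-- A maximal b-matching: no edge of `G` can be added without violating a capacity. -/
def IsMaximalBMatching [DecidableEq V] (G : SimpleGraph V) (cap : V → ℕ)
    (M : Multiset (Sym2 V)) : Prop :=
  IsBMatching G cap M ∧ ∀ e ∈ G.edgeSet, ¬ IsBMatching G cap (e ::ₘ M)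

open Finset

theorem isVertexCover_iff_forall_mem_edgeSet {G : SimpleGraph V} {C : Set V} :
    G.IsVertexCover C ↔ ∀ e ∈ G.edgeSet, ∃ v ∈ e, v ∈ C := by
  constructor
  · intro hC e he
    induction e using Sym2.ind with
    | _ u w =>
      rcases hC he with hu | hw
      · exact ⟨u, Sym2.mem_mk_left u w, hu⟩
      · exact ⟨w, Sym2.mem_mk_right u w, hw⟩
  · intro hC u w huw
    obtain ⟨v, hv, hvC⟩ := hC s(u, w) huw
    rcases Sym2.mem_iff.mp hv with rfl | rfl
    · exact Or.inl hvC
    · exact Or.inr hvC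

theorem isIndepSet_of_bipartition {G : SimpleGraph V} {L R : Finset V}
    (hpart : ∀ v : V, v ∈ L ↔ v ∉ R)
    (hbip : ∀ e ∈ G.edgeSet, ∃ u v : V, e = s(u, v) ∧ u ∈ L ∧ v ∈ R) :
    G.IsIndepSet (L : Set V) ∧ G.IsIndepSet (R : Set V) := by
  have hcompl : (L : Set V)ᶜ = R := by
    ext v
    simp [hpart]
  have hcomplR : (R : Set V)ᶜ = L := by rw [← hcompl, compl_compl]
  rw [← SimpleGraph.isVertexCover_compl, ← SimpleGraph.isVertexCover_compl, hcompl, hcomplR,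
    isVertexCover_iff_forall_mem_edgeSet, isVertexCover_iff_forall_mem_edgeSet]
  constructor
  · intro e he
    obtain ⟨u, v, rfl, -, hv⟩ := hbip e he
    exact ⟨v, Sym2.mem_mk_right u v, hv⟩
  · intro e he
    obtain ⟨u, v, rfl, hu, -⟩ := hbip e he
    exact ⟨u, Sym2.mem_mk_left u v, hu⟩

theorem exists_isMatching_card_eq_matchNum (G : SimpleGraph V) :
    ∃ N : Finset (Sym2 V), IsMatching G N ∧ N.card = matchNum G := by
  set sizes := {n | ∃ N : Finset (Sym2 V), IsMatching G N ∧ N.card = n}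
  have hempty : IsMatching G ∅ := ⟨by simp, by simp⟩
  by_cases hbdd : BddAbove sizes
  · exact Nat.sSup_mem (s := sizes) ⟨0, ∅, hempty, rfl⟩ hbdd
  · -- without an upper bound `sSup` is the junk value `0`, the size of the empty matching
    refine ⟨∅, hempty, ?_⟩
    rw [matchNum, csSup_of_not_bddAbove hbdd, csSup_empty]
    rfl

theorem IsMatching.card_le_card_of_isVertexCover {G : SimpleGraph V} {N : Finset (Sym2 V)}
    (hN : IsMatching G N) {C : Finset V} (hC : G.IsVertexCover (C : Set V)) :
    N.card ≤ C.card := by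
  refine card_le_card_of_forall_subsingleton (fun e v => v ∈ e) (fun e he => ?_)
    fun v _ e he e' he' => ?_
  · obtain ⟨v, hve, hvC⟩ := isVertexCover_iff_forall_mem_edgeSet.mp hC e (hN.1 e he)
    exact ⟨v, hvC, hve⟩
  · by_contra hne
    exact hN.2 e he.1 e' he'.1 hne v he.2 he'.2

section DegreeCounting

variable [DecidableEq V]

theorem sum_countP_mem_eq_sum_card_filter (S : Finset V) (M : Multiset (Sym2 V)) :
    ∑ u ∈ S, M.countP (fun e => u ∈ e) = (M.map fun e => #{u ∈ S | u ∈ e}).sum := by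
  induction M using Multiset.induction with
  | empty => simp
  | cons e M ih =>
    simp only [Multiset.countP_cons, sum_add_distrib, ih, Multiset.map_cons, Multiset.sum_cons,
      card_filter]
    ring

theorem sum_countP_mem_le_card_of_isIndepSet {G : SimpleGraph V} {M : Multiset (Sym2 V)}
    (hMG : ∀ e ∈ M, e ∈ G.edgeSet) {S : Finset V} (hS : G.IsIndepSet (S : Set V)) :
    ∑ u ∈ S, M.countP (fun e => u ∈ e) ≤ Multiset.card M := by
  have hle_one : ∀ e ∈ M, #{u ∈ S | u ∈ e} ≤ 1 := by
    intro e he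
    refine card_le_one.mpr fun a ha b hb => ?_
    rw [mem_filter] at ha hb
    by_contra hab
    have hadj : G.Adj a b := by
      rw [← SimpleGraph.mem_edgeSet, ← (Sym2.mem_and_mem_iff hab).mp ⟨ha.2, hb.2⟩]
      exact hMG e he
    exact hS ha.1 hb.1 hab hadj
  calc ∑ u ∈ S, M.countP (fun e => u ∈ e) = (M.map fun e => #{u ∈ S | u ∈ e}).sum :=
        sum_countP_mem_eq_sum_card_filter S M
    _ ≤ (M.map fun _ => 1).sum := Multiset.sum_map_le_sum_map _ _ hle_one
    _ = Multiset.card M := by simp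

theorem card_filter_countP_eq_mul_le {G : SimpleGraph V} {M : Multiset (Sym2 V)}
    (hMG : ∀ e ∈ M, e ∈ G.edgeSet) {S : Finset V} (hS : G.IsIndepSet (S : Set V)) (c : ℕ) :
    #{v ∈ S | M.countP (fun e => v ∈ e) = c} * c ≤ Multiset.card M :=
  calc #{v ∈ S | M.countP (fun e => v ∈ e) = c} * c
      = ∑ v ∈ S with M.countP (fun e => v ∈ e) = c, M.countP (fun e => v ∈ e) := by
        rw [sum_congr rfl fun v hv => (mem_filter.mp hv).2, sum_const, smul_eq_mul]
    _ ≤ ∑ v ∈ S, M.countP (fun e => v ∈ e) := sum_le_sum_of_subset (filter_subset _ _)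
    _ ≤ Multiset.card M := sum_countP_mem_le_card_of_isIndepSet hMG hS

theorem IsMaximalBMatching.exists_countP_eq {G : SimpleGraph V} {cap : V → ℕ}
    {M : Multiset (Sym2 V)} (hM : IsMaximalBMatching G cap M) {e : Sym2 V}
    (he : e ∈ G.edgeSet) : ∃ v ∈ e, M.countP (fun f => v ∈ f) = cap v := by
  obtain ⟨⟨hMG, hcap⟩, hmax⟩ := hM
  by_contra! hunsat
  refine hmax e he ⟨fun f hf => ?_, fun v => ?_⟩
  · rcases Multiset.mem_cons.mp hf with rfl | hf
    exacts [he, hMG f hf]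
  · rw [Multiset.countP_cons]
    by_cases hv : v ∈ e
    · simpa [hv] using lt_of_le_of_ne (hcap v) (hunsat v hv)
    · simpa [hv] using hcap v

end DegreeCounting

theorem maximal_bmatching_size_general [DecidableEq V] (G : SimpleGraph V)
    (L R : Finset V) (hpart : ∀ v : V, v ∈ L ↔ v ∉ R)
    (hbip : ∀ e ∈ G.edgeSet, ∃ u v : V, e = s(u, v) ∧ u ∈ L ∧ v ∈ R)
    (ℓ r : ℕ)
    (M : Multiset (Sym2 V))
    (hM : IsMaximalBMatching G (fun v => if v ∈ L then ℓ else r) M) :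
    (matchNum G : ℝ) * (ℓ * r) / (ℓ + r) ≤ (Multiset.card M : ℝ) := by
  obtain ⟨N, hN, hNcard⟩ := exists_isMatching_card_eq_matchNum G
  set satL := {v ∈ L | M.countP (fun e => v ∈ e) = ℓ}
  set satR := {v ∈ R | M.countP (fun e => v ∈ e) = r}
  have hcover : G.IsVertexCover ↑(satL ∪ satR) := by
    refine isVertexCover_iff_forall_mem_edgeSet.mpr fun e he => ?_
    obtain ⟨v, hve, hsat⟩ := hM.exists_countP_eq he
    refine ⟨v, hve, ?_⟩
    by_cases hvL : v ∈ L
    · exact mem_union_left _ (mem_filter.mpr ⟨hvL, by simpa [hvL] using hsat⟩)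
    · have hvR : v ∈ R := (hpart v).not_left.mp hvL
      exact mem_union_right _ (mem_filter.mpr ⟨hvR, by simpa [hvL] using hsat⟩)
  have hN_le : N.card ≤ satL.card + satR.card :=
    (hN.card_le_card_of_isVertexCover hcover).trans (card_union_le _ _)
  obtain ⟨hL, hR⟩ := isIndepSet_of_bipartition hpart hbip
  have hsatL := card_filter_countP_eq_mul_le hM.1.1 hL ℓ
  have hsatR := card_filter_countP_eq_mul_le hM.1.1 hR r
  have hcount : N.card * (ℓ * r) ≤ Multiset.card M * (ℓ + r) :=
    calc N.card * (ℓ * r) ≤ (satL.card + satR.card) * (ℓ * r) := by gcongr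
      _ = satL.card * ℓ * r + satR.card * r * ℓ := by ring
      _ ≤ Multiset.card M * r + Multiset.card M * ℓ := by gcongr
      _ = Multiset.card M * (ℓ + r) := by ring
  rw [← hNcard]
  exact div_le_of_le_mul₀ (by positivity) (by positivity) (by exact_mod_cast hcount)

theorem maximal_bmatching_size [Fintype V] [DecidableEq V] (G : SimpleGraph V)
    (L R : Finset V) (hpart : ∀ v : V, v ∈ L ↔ v ∉ R)
    (hbip : ∀ e ∈ G.edgeSet, ∃ u v : V, e = s(u, v) ∧ u ∈ L ∧ v ∈ R)
    (ℓ r : ℕ) (hℓ : 0 < ℓ) (hr : 0 < r)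
    (M : Multiset (Sym2 V))
    (hM : IsMaximalBMatching G (fun v => if v ∈ L then ℓ else r) M) :
    (matchNum G : ℝ) * (ℓ * r) / (ℓ + r) ≤ (Multiset.card M : ℝ) :=
  maximal_bmatching_size_general G L R hpart hbip ℓ r M hM
end

section
/- Let G be bipartite, M₁ a matching in G, and M₂ a b-matching in G between V(M₁) and its complement where vertices in V(M₁) have capacity k and vertices outside V(M₁) have capacity at most k·b, with b ≥ 1 and δ = 1/b ≤ 1. Then G restricted to the edge set M₁ ∪ M₂ contains a matching of size at least (1-δ)·|M₁| + (δ/k)·|M₂|. -/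
variable {V : Type*}

/-!
The weights `x = (1 - 1/b) · 1_{M₁} + ((1/b)/k) · mult_{M₂}` form a fractional matching of
`M₁ ∪ M₂`: a vertex matched by `M₁` has load at most `(1 - 1/b) + (1/b)/k · k ≤ 1`, an unmatched
one at most `(1/b)/k · k b ≤ 1`. The value of `x` is the left-hand side. Summing the loads over a
vertex cover bounds this value by the size of the cover, and by König's theorem a minimum vertex
cover of a bipartite graph is no larger than a maximum matching.
-/

open Finset SimpleGraph

lemma isMatching_image_mk_of_injective {H : SimpleGraph V} [DecidableEq V] {C : Finset V}
    (φ : C → V) (hφ : Function.Injective φ) (hadj : ∀ c : C, H.Adj c (φ c))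
    (hout : ∀ c : C, φ c ∉ C) :
    IsMatching H (C.attach.image fun c => s(c.1, φ c)) ∧
      #(C.attach.image fun c => s(c.1, φ c)) = #C := by
  have hmem : ∀ c c' : C, (c : V) ∈ s(c'.1, φ c') → c = c' := by
    intro c c' h
    rcases Sym2.mem_iff.mp h with h | h
    · exact Subtype.ext h
    · exact absurd (h ▸ c.2) (hout c')
  have hφmem : ∀ c c' : C, φ c ∈ s(c'.1, φ c') → c = c' := by
    intro c c' h
    rcases Sym2.mem_iff.mp h with h | h
    · exact absurd (h ▸ c'.2) (hout c)
    · exact hφ h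
  refine ⟨⟨?_, ?_⟩, ?_⟩
  · simp only [mem_image, mem_attach, true_and, forall_exists_index, forall_apply_eq_imp_iff]
    exact fun c => H.mem_edgeSet.mpr (hadj c)
  · simp only [mem_image, mem_attach, true_and, forall_exists_index, forall_apply_eq_imp_iff]
    intro c c' hne v hv hv'
    rcases Sym2.mem_iff.mp hv with rfl | rfl
    · exact hne (by rw [hmem c c' hv'])
    · exact hne (by rw [hφmem c c' hv'])
  · refine (card_image_of_injective _ fun c c' h => hmem c c' ?_).trans (card_attach)
    rw [← h]
    exact Sym2.mem_mk_left _ _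

section Koenig

variable [Fintype V] [DecidableEq V] {H : SimpleGraph V} [DecidableRel H.Adj] {C : Finset V}

/-- If some `S ⊆ C ∩ s` had fewer than `#S` neighbours outside `C`, replacing `S` by those
neighbours would give a smaller vertex cover. -/
lemma card_le_card_biUnion_neighborFinset_sdiff {s t : Set V} (hH : H.IsBipartiteWith s t)
    (hC : H.IsVertexCover C) (hmin : ∀ C' : Finset V, H.IsVertexCover C' → #C ≤ #C')
    {S : Finset V} (hSC : S ⊆ C) (hSs : ∀ x ∈ S, x ∈ s) :
    #S ≤ #(S.biUnion fun c => H.neighborFinset c \ C) := by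
  by_contra! hlt
  set C' := (C \ S) ∪ S.biUnion fun c => H.neighborFinset c \ C
  have hcov : ∀ ⦃u v⦄, H.Adj u v → u ∈ C → u ∈ C' ∨ v ∈ C' := by
    intro u v huv hu
    by_cases huS : u ∈ S
    · have hvS : v ∉ S := fun hvS =>
        hH.disjoint.notMem_of_mem_left (hSs v hvS) (hH.mem_of_mem_adj (hSs u huS) huv)
      right
      by_cases hv : v ∈ C
      · exact mem_union_left _ (mem_sdiff.mpr ⟨hv, hvS⟩)
      · exact mem_union_right _ (mem_biUnion.mpr ⟨u, huS, by simp [huv, hv]⟩)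
    · exact Or.inl (mem_union_left _ (mem_sdiff.mpr ⟨hu, huS⟩))
  have hC' : H.IsVertexCover C' := fun _ _ huv =>
    (hC huv).elim (hcov huv) fun hv => (hcov huv.symm hv).symm
  have := hmin C' hC'
  have : #C' ≤ #(C \ S) + #(S.biUnion fun c => H.neighborFinset c \ C) := card_union_le _ _
  have := card_sdiff_of_subset hSC
  have := card_le_card hSC
  omega

lemma card_le_card_biUnion_neighborFinset_sdiff_of_compl {s : Set V}
    (hH : H.IsBipartiteWith s sᶜ)
    (hC : H.IsVertexCover C) (hmin : ∀ C' : Finset V, H.IsVertexCover C' → #C ≤ #C')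
    {S : Finset V} (hSC : S ⊆ C) :
    #S ≤ #(S.biUnion fun c => H.neighborFinset c \ C) := by
  classical
  set N : V → Finset V := fun c => H.neighborFinset c \ C
  have hS₁ := card_le_card_biUnion_neighborFinset_sdiff hH hC hmin
    (S := {x ∈ S | x ∈ s}) ((filter_subset _ _).trans hSC) (fun x hx => (mem_filter.mp hx).2)
  have hS₂ := card_le_card_biUnion_neighborFinset_sdiff hH.symm hC hmin
    (S := {x ∈ S | x ∉ s}) ((filter_subset _ _).trans hSC) (fun x hx => (mem_filter.mp hx).2)
  have hdisj : Disjoint ({x ∈ S | x ∈ s}.biUnion N) ({x ∈ S | x ∉ s}.biUnion N) := by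
    simp only [Finset.disjoint_left, mem_biUnion, mem_filter, N, mem_sdiff, mem_neighborFinset]
    rintro w ⟨u, ⟨-, hu⟩, huw, -⟩ ⟨v, ⟨-, hv⟩, hvw, -⟩
    exact hH.mem_of_mem_adj hu huw (hH.symm.mem_of_mem_adj hv hvw)
  calc #S = #{x ∈ S | x ∈ s} + #{x ∈ S | x ∉ s} := (card_filter_add_card_filter_not _).symm
    _ ≤ #({x ∈ S | x ∈ s}.biUnion N) + #({x ∈ S | x ∉ s}.biUnion N) := add_le_add hS₁ hS₂
    _ = #(({x ∈ S | x ∈ s} ∪ {x ∈ S | x ∉ s}).biUnion N) := by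
        rw [union_biUnion, card_union_of_disjoint hdisj]
    _ = #(S.biUnion N) := by rw [filter_union_filter_not_eq]

/-- König's theorem. -/
theorem exists_isMatching_card_eq_of_isVertexCover {s : Set V} (hH : H.IsBipartiteWith s sᶜ)
    (hC : H.IsVertexCover C)
    (hmin : ∀ C' : Finset V, H.IsVertexCover C' → #C ≤ #C') :
    ∃ M : Finset (Sym2 V), IsMatching H M ∧ #M = #C := by
  have hall : ∀ S : Finset C, #S ≤ #(S.biUnion fun c => H.neighborFinset c \ C) := by
    intro S
    have := card_le_card_biUnion_neighborFinset_sdiff_of_compl hH hC hmin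
      (S := S.map (Function.Embedding.subtype _)) fun x hx => by
        obtain ⟨c, -, rfl⟩ := mem_map.mp hx
        exact c.2
    rwa [card_map, map_eq_image, image_biUnion] at this
  obtain ⟨φ, hφ, hφN⟩ := (all_card_le_biUnion_card_iff_exists_injective _).mp hall
  simp only [mem_sdiff, mem_neighborFinset] at hφN
  exact ⟨_, isMatching_image_mk_of_injective φ hφ (fun c => (hφN c).1) fun c => (hφN c).2⟩

end Koenig

lemma IsMatching.card_le_matchNum [Fintype V] [DecidableEq V] {H : SimpleGraph V}
    {M : Finset (Sym2 V)} (hM : IsMatching H M) : #M ≤ matchNum H :=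
  le_csSup ⟨Fintype.card (Sym2 V), fun _ ⟨M', _, h⟩ => h ▸ card_le_univ M'⟩ ⟨M, hM, rfl⟩

theorem exists_isVertexCover_card_le_matchNum [Fintype V] [DecidableEq V] {H : SimpleGraph V}
    {s : Set V} (hH : H.IsBipartiteWith s sᶜ) :
    ∃ C : Finset V, H.IsVertexCover C ∧ #C ≤ matchNum H := by
  classical
  obtain ⟨C, hC, hmin⟩ :=
    exists_min_image {C : Finset V | H.IsVertexCover C} card ⟨univ, by simp⟩
  rw [mem_filter] at hC
  obtain ⟨M, hM, hcard⟩ := exists_isMatching_card_eq_of_isVertexCover hH hC.2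
    fun C' hC' => hmin C' (mem_filter.mpr ⟨mem_univ _, hC'⟩)
  exact ⟨C, hC.2, hcard ▸ hM.card_le_matchNum⟩

lemma SimpleGraph.IsVertexCover.exists_mem_of_mem_edgeSet {H : SimpleGraph V} {C : Set V}
    (hC : H.IsVertexCover C) {e : Sym2 V} (he : e ∈ H.edgeSet) : ∃ v ∈ C, v ∈ e := by
  induction e using Sym2.ind with | _ u v =>
  rcases hC he with h | h
  exacts [⟨u, h, Sym2.mem_mk_left u v⟩, ⟨v, h, Sym2.mem_mk_right u v⟩]

def IsFractionalMatching [DecidableEq V] (H : SimpleGraph V) (E : Finset (Sym2 V))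
    (x : Sym2 V → ℝ) : Prop :=
  (∀ e ∈ E, e ∈ H.edgeSet ∧ 0 ≤ x e) ∧ ∀ v : V, ∑ e ∈ E with v ∈ e, x e ≤ 1

namespace IsFractionalMatching

variable [DecidableEq V] {H : SimpleGraph V} {E : Finset (Sym2 V)} {x : Sym2 V → ℝ}

theorem sum_le_card_of_isVertexCover (hx : IsFractionalMatching H E x) {C : Finset V}
    (hC : H.IsVertexCover C) : ∑ e ∈ E, x e ≤ #C :=
  calc ∑ e ∈ E, x e ≤ ∑ e ∈ E, ∑ v ∈ C with v ∈ e, x e := sum_le_sum fun e he => by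
        obtain ⟨v, hvC, hve⟩ := hC.exists_mem_of_mem_edgeSet (hx.1 e he).1
        have : (1 : ℝ) ≤ #{v ∈ C | v ∈ e} := by
          exact_mod_cast card_pos.mpr ⟨v, mem_filter.mpr ⟨hvC, hve⟩⟩
        rw [sum_const, nsmul_eq_mul]
        exact le_mul_of_one_le_left (hx.1 e he).2 this
    _ = ∑ v ∈ C, ∑ e ∈ E with v ∈ e, x e := by simp only [sum_filter]; exact sum_comm
    _ ≤ ∑ _v ∈ C, 1 := sum_le_sum fun v _ => hx.2 v
    _ = #C := by simp

theorem sum_le_matchNum [Fintype V] (hx : IsFractionalMatching H E x) {s : Set V}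
    (hH : H.IsBipartiteWith s sᶜ) : ∑ e ∈ E, x e ≤ matchNum H := by
  obtain ⟨C, hC, hCM⟩ := exists_isVertexCover_card_le_matchNum hH
  exact (hx.sum_le_card_of_isVertexCover hC).trans (by exact_mod_cast hCM)

end IsFractionalMatching

lemma Multiset.sum_count_filter_eq_countP {α : Type*} [DecidableEq α] {m : Multiset α}
    {E : Finset α} (hm : ∀ a ∈ m, a ∈ E) (p : α → Prop) [DecidablePred p] :
    ∑ a ∈ E with p a, m.count a = m.countP p := by
  rw [Multiset.countP_eq_card_filter, ← Multiset.sum_count_eq_card (s := {a ∈ E | p a})]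
  · refine sum_congr rfl fun a ha => ?_
    rw [Multiset.count_filter_of_pos (mem_filter.mp ha).2]
  · intro a ha
    obtain ⟨ham, hpa⟩ := Multiset.mem_filter.mp ha
    exact mem_filter.mpr ⟨hm a ham, hpa⟩

lemma IsMatching.card_filter_mem_le_one [DecidableEq V] {G : SimpleGraph V}
    {M : Finset (Sym2 V)} (hM : IsMatching G M) (v : V) : #{e ∈ M | v ∈ e} ≤ 1 :=
  card_le_one.mpr fun e he f hf => by
    rw [mem_filter] at he hf
    by_contra hne
    exact hM.2 e he.1 f hf.1 hne v he.2 hf.2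

lemma card_filter_mem_eq_zero_of_not_matched [DecidableEq V] {M : Finset (Sym2 V)} {v : V}
    (hv : ¬ Matched M v) : #{e ∈ M | v ∈ e} = 0 :=
  card_eq_zero.mpr (filter_eq_empty_iff.mpr fun e he hve => hv ⟨e, he, hve⟩)

lemma SimpleGraph.IsBipartiteWith.mono {G H : SimpleGraph V} {s t : Set V}
    (hG : G.IsBipartiteWith s t) (hHG : H ≤ G) : H.IsBipartiteWith s t :=
  ⟨hG.disjoint, fun _ _ huv => hG.mem_of_adj (hHG huv)⟩

lemma isBipartiteWith_compl_of_forall_mem_edgeSet {G : SimpleGraph V} {L : Set V}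
    (h : ∀ e ∈ G.edgeSet, ∃ u v : V, e = s(u, v) ∧ u ∈ L ∧ v ∉ L) :
    G.IsBipartiteWith L Lᶜ where
  disjoint := disjoint_compl_right
  mem_of_adj u v huv := by
    obtain ⟨a, b, hab, ha, hb⟩ := h _ (G.mem_edgeSet.mpr huv)
    rcases Sym2.eq_iff.mp hab with ⟨rfl, rfl⟩ | ⟨rfl, rfl⟩
    exacts [Or.inl ⟨ha, hb⟩, Or.inr ⟨hb, ha⟩]

section Combine

variable [DecidableEq V] {G : SimpleGraph V} {M₁ : Finset (Sym2 V)} {M₂ : Multiset (Sym2 V)}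

def combinedWeight (M₁ : Finset (Sym2 V)) (M₂ : Multiset (Sym2 V)) (α β : ℝ) (e : Sym2 V) : ℝ :=
  α * (if e ∈ M₁ then 1 else 0) + β * M₂.count e

lemma fromEdgeSet_union_le {cap : V → ℕ} (hM₁ : IsMatching G M₁) (hM₂ : IsBMatching G cap M₂) :
    fromEdgeSet ((↑M₁ : Set (Sym2 V)) ∪ {e | e ∈ M₂}) ≤ G :=
  (fromEdgeSet_le G).mpr fun e he => he.1.elim (hM₁.1 e) (hM₂.1 e)

theorem isFractionalMatching_combinedWeight {cap : V → ℕ} (hM₁ : IsMatching G M₁)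
    (hM₂ : IsBMatching G cap M₂) {α β : ℝ} (hα : 0 ≤ α) (hβ : 0 ≤ β)
    (hmatched : ∀ v, Matched M₁ v → α + β * cap v ≤ 1)
    (hunmatched : ∀ v, ¬ Matched M₁ v → β * cap v ≤ 1) :
    IsFractionalMatching (fromEdgeSet ((↑M₁ : Set (Sym2 V)) ∪ {e | e ∈ M₂})) (M₁ ∪ M₂.toFinset)
      (combinedWeight M₁ M₂ α β) := by
  refine ⟨fun e he => ⟨?_, by unfold combinedWeight; positivity⟩, fun v => ?_⟩
  · have heG : e ∈ G.edgeSet := by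
      rcases mem_union.mp he with he | he
      exacts [hM₁.1 e he, hM₂.1 e (Multiset.mem_toFinset.mp he)]
    rw [edgeSet_fromEdgeSet]
    exact ⟨by simpa using he, G.not_isDiag_of_mem_edgeSet heG⟩
  have hM₁v : ∑ e ∈ M₁ ∪ M₂.toFinset with v ∈ e, (if e ∈ M₁ then (1 : ℝ) else 0) =
      #{e ∈ M₁ | v ∈ e} := by
    rw [sum_ite_mem, sum_const, nsmul_one]
    congr 2
    ext e
    simp only [mem_inter, mem_filter, mem_union]
    tauto
  have hM₂v : ∑ e ∈ M₁ ∪ M₂.toFinset with v ∈ e, (M₂.count e : ℝ) = M₂.countP (v ∈ ·) := by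
    exact_mod_cast Multiset.sum_count_filter_eq_countP
      (fun e he => mem_union_right _ (Multiset.mem_toFinset.mpr he)) (v ∈ ·)
  have hcap : (M₂.countP (v ∈ ·) : ℝ) ≤ cap v := by exact_mod_cast hM₂.2 v
  calc ∑ e ∈ M₁ ∪ M₂.toFinset with v ∈ e, combinedWeight M₁ M₂ α β e
      = α * #{e ∈ M₁ | v ∈ e} + β * M₂.countP (v ∈ ·) := by
        rw [← hM₁v, ← hM₂v, mul_sum, mul_sum, ← sum_add_distrib]
        rfl
    _ ≤ α * #{e ∈ M₁ | v ∈ e} + β * cap v := by gcongr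
    _ ≤ 1 := by
        by_cases hv : Matched M₁ v
        · have : (#{e ∈ M₁ | v ∈ e} : ℝ) ≤ 1 := by exact_mod_cast hM₁.card_filter_mem_le_one v
          nlinarith [hmatched v hv]
        · rw [card_filter_mem_eq_zero_of_not_matched hv, Nat.cast_zero, mul_zero, zero_add]
          exact hunmatched v hv

lemma sum_combinedWeight (α β : ℝ) :
    ∑ e ∈ M₁ ∪ M₂.toFinset, combinedWeight M₁ M₂ α β e =
      α * #M₁ + β * Multiset.card M₂ := by
  have hcount : ∑ e ∈ M₁ ∪ M₂.toFinset, (M₂.count e : ℝ) = Multiset.card M₂ := by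
    exact_mod_cast Multiset.sum_count_eq_card
      fun e he => mem_union_right _ (Multiset.mem_toFinset.mpr he)
  simp only [combinedWeight]
  rw [sum_add_distrib, ← mul_sum, ← mul_sum, sum_ite_mem, union_inter_cancel_left, sum_const,
    nsmul_one, hcount]

end Combine

theorem bipartite_two_matchings_combine_general [Fintype V] [DecidableEq V] (G : SimpleGraph V)
    (L : Set V) (hbip : ∀ e ∈ G.edgeSet, ∃ u v : V, e = s(u, v) ∧ u ∈ L ∧ v ∉ L)
    (M₁ : Finset (Sym2 V)) (hM₁ : IsMatching G M₁)
    (k : ℕ) (b : ℝ) (hb : 1 ≤ b)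
    (cap : V → ℕ)
    (hcapM : ∀ v : V, Matched M₁ v → cap v = k)
    (hcapU : ∀ v : V, ¬ Matched M₁ v → (cap v : ℝ) ≤ (k : ℝ) * b)
    (M₂ : Multiset (Sym2 V)) (hM₂ : IsBMatching G cap M₂) :
    (1 - 1/b) * (M₁.card : ℝ) + ((1/b)/k) * (Multiset.card M₂ : ℝ) ≤
      (matchNum (SimpleGraph.fromEdgeSet ((↑M₁ : Set (Sym2 V)) ∪ {e | e ∈ M₂})) : ℝ) := by
  have hb0 : 0 < b := by linarith
  have hδk : (1/b)/k * k ≤ 1/b := by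
    rcases eq_or_ne (k : ℝ) 0 with hk | hk
    · rw [hk, mul_zero]; positivity
    · rw [div_mul_cancel₀ _ hk]
  have hx := isFractionalMatching_combinedWeight hM₁ hM₂
    (sub_nonneg.mpr ((div_le_one hb0).mpr hb)) (by positivity : 0 ≤ (1/b)/k)
    (fun v hv => by rw [hcapM v hv]; linarith)
    fun v hv => calc (1/b)/k * cap v ≤ (1/b)/k * (k * b) := by gcongr; exact hcapU v hv
      _ = ((1/b)/k * k) * b := by ring
      _ ≤ 1/b * b := by gcongr
      _ = 1 := by field_simp
  have hH :=
    (isBipartiteWith_compl_of_forall_mem_edgeSet hbip).mono (fromEdgeSet_union_le hM₁ hM₂)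
  rw [← sum_combinedWeight]
  exact hx.sum_le_matchNum hH

theorem bipartite_two_matchings_combine [Fintype V] [DecidableEq V] (G : SimpleGraph V)
    (L : Set V) (hbip : ∀ e ∈ G.edgeSet, ∃ u v : V, e = s(u, v) ∧ u ∈ L ∧ v ∉ L)
    (M₁ : Finset (Sym2 V)) (hM₁ : IsMatching G M₁)
    (k : ℕ) (hk : 0 < k) (b : ℝ) (hb : 1 ≤ b)
    (cap : V → ℕ)
    (hcapM : ∀ v : V, Matched M₁ v → cap v = k)
    (hcapU : ∀ v : V, ¬ Matched M₁ v → (cap v : ℝ) ≤ (k : ℝ) * b)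
    (M₂ : Multiset (Sym2 V)) (hM₂ : IsBMatching G cap M₂)
    (hbetween : ∀ e ∈ M₂, ∃ u v : V, e = s(u, v) ∧ Matched M₁ u ∧ ¬ Matched M₁ v) :
    (1 - 1/b) * (M₁.card : ℝ) + ((1/b)/k) * (Multiset.card M₂ : ℝ) ≤
      (matchNum (SimpleGraph.fromEdgeSet ((↑M₁ : Set (Sym2 V)) ∪ {e | e ∈ M₂})) : ℝ) :=
  bipartite_two_matchings_combine_general G L hbip M₁ hM₁ k b hb cap hcapM hcapU M₂ hM₂
end

section
/- Let M₁ be a maximal matching in a (not necessarily bipartite) graph G with |M₁| = (1/2 + c)·μ(G), let S be a set of vertex-disjoint 3-augmenting paths w.r.t. M₁, and let M₂ be a maximal b-matching (b ≥ 1 integer) in a bipartite subgraph B such that each vertex of V(M₁) has capacity 1 and each vertex outside V(M₁) has capacity b, where for every path u'−u−v−v' in S both edges (u,u') and (v,v') belong to B. Then the number of edges (u,v) of M₁ lying on such paths in S whose both endpoints are matched by M₂ is at least |S| − 2|M₁|/b. -/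
variable {V : Type*}

/-- The four vertices of a (candidate) length-three augmenting path `u' - u - v - v'`,
encoded as the tuple `(u', u, v, v')`. -/
def pathVerts [DecidableEq V] (p : V × V × V × V) : Finset V :=
  {p.1, p.2.1, p.2.2.1, p.2.2.2}

/-- `p = (u', u, v, v')` is a length-three augmenting path for the matching `M` in `G`:
`u'` and `v'` are unmatched and distinct, `(u,v) ∈ M`, and the outer edges are
edges of `G` outside `M`. -/
def IsAugPath3 (G : SimpleGraph V) (M : Finset (Sym2 V)) (p : V × V × V × V) : Prop :=
  p.1 ≠ p.2.2.2 ∧ ¬ Matched M p.1 ∧ ¬ Matched M p.2.2.2 ∧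
  s(p.2.1, p.2.2.1) ∈ M ∧
  s(p.1, p.2.1) ∈ G.edgeSet ∧ s(p.1, p.2.1) ∉ M ∧
  s(p.2.2.1, p.2.2.2) ∈ G.edgeSet ∧ s(p.2.2.1, p.2.2.2) ∉ M

/-- The paths in `P` are pairwise vertex-disjoint. -/
def PairwiseDisjointPaths [DecidableEq V] (P : Finset (V × V × V × V)) : Prop :=
  ∀ p ∈ P, ∀ q ∈ P, p ≠ q → Disjoint (pathVerts p) (pathVerts q)

/-!
A path of `S` whose middle edge is not doubly matched by `M₂` has an outer endpoint saturated
by `M₂`: otherwise the outer edge at an `M₂`-free middle vertex could be added to `M₂`. The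
outer endpoints of distinct paths are distinct, lie outside `V(M₁)`, and every `M₂`-edge has
exactly one endpoint outside `V(M₁)`; hence `b` times the number of such paths is at most
`|M₂|`. Every `M₂`-edge also has an endpoint in `V(M₁)`, where capacities are `1`, so
`|M₂| ≤ |V(M₁)| ≤ 2|M₁|`.
-/

open Finset

theorem Multiset.sum_countP_eq_sum_map_card_filter {α β : Type*} (W : Finset β)
    (r : β → α → Prop) [DecidableRel r] (M : Multiset α) :
    ∑ w ∈ W, M.countP (r w) = (M.map fun e => #{w ∈ W | r w e}).sum := by
  induction M using Multiset.induction_on with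
  | empty => simp
  | cons a M ih => simp [Multiset.countP_cons, sum_add_distrib, ih, add_comm]

theorem Multiset.sum_countP_le_card {α β : Type*} {W : Finset β}
    {r : β → α → Prop} [DecidableRel r] {M : Multiset α}
    (h : ∀ e ∈ M, #{w ∈ W | r w e} ≤ 1) :
    ∑ w ∈ W, M.countP (r w) ≤ Multiset.card M := by
  rw [sum_countP_eq_sum_map_card_filter]
  simpa using Multiset.sum_map_le_sum_map _ (fun _ => 1) h

theorem Multiset.card_le_sum_countP {α β : Type*} {W : Finset β}
    {r : β → α → Prop} [DecidableRel r] {M : Multiset α}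
    (h : ∀ e ∈ M, ∃ w ∈ W, r w e) :
    Multiset.card M ≤ ∑ w ∈ W, M.countP (r w) := by
  rw [sum_countP_eq_sum_map_card_filter]
  refine le_of_eq_of_le (by simp) (Multiset.sum_map_le_sum_map (fun _ => 1) _ fun e he => ?_)
  obtain ⟨w, hw, hwe⟩ := h e he
  exact one_le_card.2 ⟨w, mem_filter.2 ⟨hw, hwe⟩⟩

section

variable [DecidableEq V] {G B : SimpleGraph V} {cap : V → ℕ}
  {M₁ : Finset (Sym2 V)} {M₂ : Multiset (Sym2 V)}

def matchedVerts (M : Finset (Sym2 V)) : Finset V := M.biUnion Sym2.toFinset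

theorem mem_matchedVerts {M : Finset (Sym2 V)} {v : V} :
    v ∈ matchedVerts M ↔ Matched M v := by
  simp [matchedVerts, Matched]

theorem card_matchedVerts_le (M : Finset (Sym2 V)) : #(matchedVerts M) ≤ 2 * #M :=
  calc #(matchedVerts M) ≤ ∑ e ∈ M, #e.toFinset := card_biUnion_le
    _ ≤ ∑ _e ∈ M, 2 := sum_le_sum fun e _ => by rw [Sym2.card_toFinset]; split_ifs <;> omega
    _ = 2 * #M := by rw [sum_const, smul_eq_mul, mul_comm]

theorem IsBMatching.card_le_of_forall_exists_mem (hM₂ : IsBMatching B cap M₂) {W : Finset V}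
    (hcover : ∀ e ∈ M₂, ∃ w ∈ W, w ∈ e) (hcap : ∀ w ∈ W, cap w ≤ 1) :
    Multiset.card M₂ ≤ #W :=
  calc Multiset.card M₂ ≤ ∑ w ∈ W, M₂.countP (w ∈ ·) := Multiset.card_le_sum_countP hcover
    _ ≤ ∑ _w ∈ W, 1 := sum_le_sum fun w hw => (hM₂.2 w).trans (hcap w hw)
    _ = #W := (card_eq_sum_ones W).symm

theorem IsMaximalBMatching.cap_le_countP_or (hM₂ : IsMaximalBMatching B cap M₂) {x y : V}
    (hxy : s(x, y) ∈ B.edgeSet) :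
    cap x ≤ M₂.countP (x ∈ ·) ∨ cap y ≤ M₂.countP (y ∈ ·) := by
  have hedges : ∀ e ∈ s(x, y) ::ₘ M₂, e ∈ B.edgeSet :=
    Multiset.forall_mem_cons.2 ⟨hxy, hM₂.1.1⟩
  obtain ⟨v, hv⟩ : ∃ v, cap v < (s(x, y) ::ₘ M₂).countP (v ∈ ·) := by
    by_contra! hcap
    exact hM₂.2 _ hxy ⟨hedges, hcap⟩
  have hle := hM₂.1.2 v
  rw [Multiset.countP_cons] at hv
  split_ifs at hv with hvxy
  · rcases Sym2.mem_iff.1 hvxy with rfl | rfl <;> omega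
  · omega

theorem IsMaximalBMatching.cap_le_countP_of_unmatched (hM₂ : IsMaximalBMatching B cap M₂)
    {x y : V} (hxy : s(x, y) ∈ B.edgeSet) (hy : cap y = 1) (hyM₂ : ¬ ∃ e ∈ M₂, y ∈ e) :
    cap x ≤ M₂.countP (x ∈ ·) := by
  have : M₂.countP (y ∈ ·) = 0 := Multiset.countP_eq_zero.2 fun e he hye => hyM₂ ⟨e, he, hye⟩
  exact (hM₂.cap_le_countP_or hxy).resolve_right (by omega)

theorem IsBMatching.card_le_two_mul_card (hM₂ : IsBMatching B cap M₂)
    (hBbip : ∀ e ∈ B.edgeSet, ∃ u v : V, e = s(u, v) ∧ Matched M₁ u ∧ ¬ Matched M₁ v)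
    (hcap1 : ∀ v, Matched M₁ v → cap v = 1) :
    Multiset.card M₂ ≤ 2 * #M₁ := by
  refine (hM₂.card_le_of_forall_exists_mem (W := matchedVerts M₁) (fun e he => ?_)
    fun w hw => (hcap1 w (mem_matchedVerts.1 hw)).le).trans (card_matchedVerts_le M₁)
  obtain ⟨u, v, rfl, hu, -⟩ := hBbip e (hM₂.1 e he)
  exact ⟨u, mem_matchedVerts.2 hu, Sym2.mem_mk_left u v⟩

theorem sum_countP_le_card_of_forall_not_matched
    (hBbip : ∀ e ∈ B.edgeSet, ∃ u v : V, e = s(u, v) ∧ Matched M₁ u ∧ ¬ Matched M₁ v)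
    (hM₂B : ∀ e ∈ M₂, e ∈ B.edgeSet) {W : Finset V} (hW : ∀ w ∈ W, ¬ Matched M₁ w) :
    ∑ w ∈ W, M₂.countP (w ∈ ·) ≤ Multiset.card M₂ :=
  Multiset.sum_countP_le_card fun e he => by
    obtain ⟨u, v, rfl, hu, -⟩ := hBbip e (hM₂B e he)
    refine (card_le_card fun w hw => ?_).trans (card_singleton v).le
    obtain ⟨hwW, hwe⟩ := mem_filter.1 hw
    rcases Sym2.mem_iff.1 hwe with rfl | rfl
    · exact absurd hu (hW _ hwW)
    · exact mem_singleton_self _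

def outerVerts (p : V × V × V × V) : Finset V := {p.1, p.2.2.2}

theorem outerVerts_subset_pathVerts (p : V × V × V × V) : outerVerts p ⊆ pathVerts p := by
  intro w hw
  simp only [outerVerts, mem_insert, mem_singleton] at hw
  rcases hw with rfl | rfl <;> simp [pathVerts]

theorem IsAugPath3.not_matched_of_mem_outerVerts {p : V × V × V × V} (hp : IsAugPath3 G M₁ p)
    {w : V} (hw : w ∈ outerVerts p) : ¬ Matched M₁ w := by
  simp only [outerVerts, mem_insert, mem_singleton] at hw
  rcases hw with rfl | rfl
  exacts [hp.2.1, hp.2.2.1]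

theorem IsAugPath3.le_sum_countP_outerVerts {b : ℕ} (hM₂ : IsMaximalBMatching B cap M₂)
    {p : V × V × V × V} (hp : IsAugPath3 G M₁ p)
    (hpB : s(p.1, p.2.1) ∈ B.edgeSet ∧ s(p.2.2.1, p.2.2.2) ∈ B.edgeSet)
    (hcap1 : ∀ v, Matched M₁ v → cap v = 1) (hcapb : ∀ v, ¬ Matched M₁ v → cap v = b)
    (hblocked : ¬ ((∃ e ∈ M₂, p.2.1 ∈ e) ∧ (∃ e ∈ M₂, p.2.2.1 ∈ e))) :
    b ≤ ∑ w ∈ outerVerts p, M₂.countP (w ∈ ·) := by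
  obtain ⟨hne, hu', hv', hmid, -⟩ := hp
  rw [outerVerts, sum_pair hne]
  rcases not_and_or.1 hblocked with hu | hv
  · have := hM₂.cap_le_countP_of_unmatched hpB.1 (hcap1 _ ⟨_, hmid, Sym2.mem_mk_left _ _⟩) hu
    rw [hcapb _ hu'] at this
    omega
  · have := hM₂.cap_le_countP_of_unmatched hpB.2.symm
      (hcap1 _ ⟨_, hmid, Sym2.mem_mk_right _ _⟩) hv
    rw [hcapb _ hv'] at this
    omega

theorem PairwiseDisjointPaths.subset {P Q : Finset (V × V × V × V)}
    (hQ : PairwiseDisjointPaths Q) (hPQ : P ⊆ Q) : PairwiseDisjointPaths P :=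
  fun p hp q hq => hQ p (hPQ hp) q (hPQ hq)

theorem sum_sum_countP_outerVerts_le_card {P : Finset (V × V × V × V)}
    (hP : ∀ p ∈ P, IsAugPath3 G M₁ p) (hdisj : PairwiseDisjointPaths P)
    (hBbip : ∀ e ∈ B.edgeSet, ∃ u v : V, e = s(u, v) ∧ Matched M₁ u ∧ ¬ Matched M₁ v)
    (hM₂B : ∀ e ∈ M₂, e ∈ B.edgeSet) :
    ∑ p ∈ P, ∑ w ∈ outerVerts p, M₂.countP (w ∈ ·) ≤ Multiset.card M₂ := by
  have houter : (P : Set (V × V × V × V)).PairwiseDisjoint outerVerts :=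
    fun p hp q hq hpq => (hdisj p hp q hq hpq).mono
      (outerVerts_subset_pathVerts p) (outerVerts_subset_pathVerts q)
  rw [← sum_biUnion houter]
  refine sum_countP_le_card_of_forall_not_matched hBbip hM₂B fun w hw => ?_
  obtain ⟨p, hp, hwp⟩ := mem_biUnion.1 hw
  exact (hP p hp).not_matched_of_mem_outerVerts hwp

end

theorem many_middle_edges_doubly_matched_general [DecidableEq V]
    (G B : SimpleGraph V) (b : ℕ) (hb : 1 ≤ b)
    (M₁ : Finset (Sym2 V))
    (S : Finset (V × V × V × V)) (hS : ∀ p ∈ S, IsAugPath3 G M₁ p)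
    (hdisj : PairwiseDisjointPaths S)
    (hBbip : ∀ e ∈ B.edgeSet, ∃ u v : V, e = s(u, v) ∧ Matched M₁ u ∧ ¬ Matched M₁ v)
    (hinB : ∀ p ∈ S, s(p.1, p.2.1) ∈ B.edgeSet ∧ s(p.2.2.1, p.2.2.2) ∈ B.edgeSet)
    (cap : V → ℕ)
    (hcap1 : ∀ v : V, Matched M₁ v → cap v = 1)
    (hcapb : ∀ v : V, ¬ Matched M₁ v → cap v = b)
    (M₂ : Multiset (Sym2 V)) (hM₂ : IsMaximalBMatching B cap M₂)
    (T : Finset (V × V × V × V))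
    (hT : ∀ p : V × V × V × V,
      p ∈ T ↔ p ∈ S ∧ (∃ e ∈ M₂, p.2.1 ∈ e) ∧ (∃ e ∈ M₂, p.2.2.1 ∈ e)) :
    (S.card : ℝ) - 2 * (M₁.card : ℝ) / b ≤ (T.card : ℝ) := by
  have hTS : T ⊆ S := fun p hp => ((hT p).1 hp).1
  have hcount : b * #(S \ T) ≤ 2 * #M₁ := calc
    b * #(S \ T) = ∑ _p ∈ S \ T, b := by rw [sum_const, smul_eq_mul, mul_comm]
    _ ≤ ∑ p ∈ S \ T, ∑ w ∈ outerVerts p, M₂.countP (w ∈ ·) := sum_le_sum fun p hp => by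
      obtain ⟨hpS, hpT⟩ := mem_sdiff.1 hp
      exact (hS p hpS).le_sum_countP_outerVerts hM₂ (hinB p hpS) hcap1 hcapb
        fun h => hpT ((hT p).2 ⟨hpS, h⟩)
    _ ≤ Multiset.card M₂ := sum_sum_countP_outerVerts_le_card (fun p hp => hS p (sdiff_subset hp))
      (hdisj.subset sdiff_subset) hBbip hM₂.1.1
    _ ≤ 2 * #M₁ := hM₂.1.card_le_two_mul_card hBbip hcap1
  have hb0 : (0 : ℝ) < b := by exact_mod_cast hb
  rw [sub_le_comm, le_div_iff₀ hb0, ← Nat.cast_sub (card_le_card hTS),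
    ← card_sdiff_of_subset hTS, mul_comm]
  exact_mod_cast hcount

theorem many_middle_edges_doubly_matched [Fintype V] [DecidableEq V]
    (G B : SimpleGraph V) (hBG : B ≤ G) (c : ℝ) (b : ℕ) (hb : 1 ≤ b)
    (M₁ : Finset (Sym2 V)) (hM₁ : IsMaximalMatching G M₁)
    (hsize : (M₁.card : ℝ) = (1/2 + c) * matchNum G)
    (S : Finset (V × V × V × V)) (hS : ∀ p ∈ S, IsAugPath3 G M₁ p)
    (hdisj : PairwiseDisjointPaths S)
    (hBbip : ∀ e ∈ B.edgeSet, ∃ u v : V, e = s(u, v) ∧ Matched M₁ u ∧ ¬ Matched M₁ v)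
    (hinB : ∀ p ∈ S, s(p.1, p.2.1) ∈ B.edgeSet ∧ s(p.2.2.1, p.2.2.2) ∈ B.edgeSet)
    (cap : V → ℕ)
    (hcap1 : ∀ v : V, Matched M₁ v → cap v = 1)
    (hcapb : ∀ v : V, ¬ Matched M₁ v → cap v = b)
    (M₂ : Multiset (Sym2 V)) (hM₂ : IsMaximalBMatching B cap M₂)
    (T : Finset (V × V × V × V))
    (hT : ∀ p : V × V × V × V,
      p ∈ T ↔ p ∈ S ∧ (∃ e ∈ M₂, p.2.1 ∈ e) ∧ (∃ e ∈ M₂, p.2.2.1 ∈ e)) :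
    (S.card : ℝ) - 2 * (M₁.card : ℝ) / b ≤ (T.card : ℝ) :=
  many_middle_edges_doubly_matched_general G B b hb M₁ S hS hdisj hBbip hinB cap hcap1 hcapb M₂ hM₂
    T hT
end
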